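/- arXiv:1203.1453 — 4 statements merged into one kernel-verified Lean document; each statement's English description precedes it below -/
import Mathlib

section
/- Let f : I ⊆ [0,∞) → ℝ be differentiable on I° with f' integrable on [a,b], where a, b ∈ I°, a < b. Fix λ, μ ∈ [0,∞) with λ + μ > 0 and q ≥ 1, and suppose |f'|^q is convex on [a,b]. Set γ₁ = (1/6)[2λ³/(λ+μ)² + 2μ − λ], γ₂ = (λ²+μ²)/(2(λ+μ)) − γ₁, γ₃ = (1/6)[2μ³/(λ+μ)² + 2λ − μ], γ₄ = (λ²+μ²)/(2(λ+μ)) − γ₃. Then |(λ f(a) + μ f(b))/(λ+μ) − (1/(b−a)) ∫_a^b f(x) dx| ≤ ((b−a)/(λ+μ)) · ((λ²+μ²)/(2(λ+μ)))^{(q−1)/q} · min{ (γ₁ |f'(b)|^q + γ₂ |f'(a)|^q)^{1/q}, (γ₃ |f'(a)|^q + γ₄ |f'(b)|^q)^{1/q} }. -/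
/-!
With `d = (λ b + μ a) / (λ + μ)`, integration by parts turns the left-hand side into
`(1 / (b - a)) |∫ (x - d) f'(x) dx|`. On `[a, b]` the convex function `|f'|^q` lies below its chord
`L`, so `|f'| ≤ L^(1/q)`, and Hölder's inequality with weight `|x - d|` bounds the integral by
`(∫ |x - d|)^(1 - 1/q) (∫ |x - d| L)^(1/q)`. Both integrals are elementary, and their values produce
the constants `γᵢ`; the two arguments of the `min` turn out to be equal.
-/

open MeasureTheory Set

theorem ConvexOn.le_chord_of_mem_Icc {φ : ℝ → ℝ} {a b x : ℝ} (hφ : ConvexOn ℝ (Icc a b) φ)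
    (hab : a < b) (hx : x ∈ Icc a b) :
    φ x ≤ ((b - x) * φ a + (x - a) * φ b) / (b - a) := by
  have hba : 0 < b - a := sub_pos.2 hab
  have key := hφ.2 (left_mem_Icc.2 hab.le) (right_mem_Icc.2 hab.le)
    (div_nonneg (sub_nonneg.2 hx.2) hba.le) (div_nonneg (sub_nonneg.2 hx.1) hba.le)
    (by field_simp; ring)
  have hx' : ((b - x) / (b - a)) • a + ((x - a) / (b - a)) • b = x := by
    simp only [smul_eq_mul]; field_simp; ring
  rw [hx', smul_eq_mul, smul_eq_mul] at key
  calc φ x ≤ (b - x) / (b - a) * φ a + (x - a) / (b - a) * φ b := key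
    _ = _ := by field_simp

theorem integral_weighted_le_rpow_mul_rpow {α : Type*} [MeasurableSpace α] {μ : Measure α}
    {w g : α → ℝ} {q : ℝ} (hq : 1 ≤ q) (hw : 0 ≤ᵐ[μ] w) (hg : 0 ≤ᵐ[μ] g)
    (hwi : Integrable w μ) (hgm : AEStronglyMeasurable g μ)
    (hwg : Integrable (fun x => w x * g x ^ q) μ) :
    ∫ x, w x * g x ∂μ ≤ (∫ x, w x ∂μ) ^ ((q - 1) / q) * (∫ x, w x * g x ^ q ∂μ) ^ (1 / q) := by
  rcases hq.eq_or_lt with rfl | hq1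
  · simp
  have hpq : (q / (q - 1)).HolderConjugate q := (Real.HolderConjugate.conjExponent hq1).symm
  set p := q / (q - 1)
  -- Hölder's inequality applied to `w ^ (1 / p)` and `w ^ (1 / q) * g`
  have hUp : ∀ᵐ x ∂μ, (w x ^ (1 / p)) ^ p = w x := by
    filter_upwards [hw] with x hx
    rw [← Real.rpow_mul hx, one_div_mul_cancel hpq.ne_zero, Real.rpow_one]
  have hVq : ∀ᵐ x ∂μ, (w x ^ (1 / q) * g x) ^ q = w x * g x ^ q := by
    filter_upwards [hw, hg] with x hx hgx
    rw [Real.mul_rpow (Real.rpow_nonneg hx _) hgx, ← Real.rpow_mul hx,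
      one_div_mul_cancel hpq.symm.ne_zero, Real.rpow_one]
  have hUV : ∀ᵐ x ∂μ, w x ^ (1 / p) * (w x ^ (1 / q) * g x) = w x * g x := by
    filter_upwards [hw] with x hx
    rw [← mul_assoc, ← Real.rpow_add' hx (by rw [hpq.one_div_add_one_div]; norm_num),
      hpq.one_div_add_one_div, div_one, Real.rpow_one]
  have hU0 : 0 ≤ᵐ[μ] fun x => w x ^ (1 / p) := by
    filter_upwards [hw] with x hx using Real.rpow_nonneg hx _
  have hV0 : 0 ≤ᵐ[μ] fun x => w x ^ (1 / q) * g x := by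
    filter_upwards [hw, hg] with x hx hgx using mul_nonneg (Real.rpow_nonneg hx _) hgx
  have hmemLp {u : α → ℝ} {r : ℝ} (hr : 0 < r) (hu0 : 0 ≤ᵐ[μ] u)
      (hum : AEStronglyMeasurable u μ) (hur : Integrable (fun x => u x ^ r) μ) :
      MemLp u (ENNReal.ofReal r) μ := by
    refine (integrable_norm_rpow_iff hum (by simpa using hr) ENNReal.ofReal_ne_top).1 ?_
    rw [ENNReal.toReal_ofReal hr.le]
    refine hur.congr ?_
    filter_upwards [hu0] with x hx
    rw [Real.norm_of_nonneg hx]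
  have hwm := hwi.aestronglyMeasurable
  have hU := hmemLp hpq.pos hU0 (hwm.aemeasurable.pow_const _).aestronglyMeasurable
    (hwi.congr (hUp.mono fun x hx => hx.symm))
  have hV := hmemLp hpq.symm.pos hV0
    ((hwm.aemeasurable.pow_const _).aestronglyMeasurable.mul hgm)
    (hwg.congr (hVq.mono fun x hx => hx.symm))
  calc ∫ x, w x * g x ∂μ = ∫ x, w x ^ (1 / p) * (w x ^ (1 / q) * g x) ∂μ :=
        integral_congr_ae (hUV.mono fun x hx => hx.symm)
    _ ≤ (∫ x, (w x ^ (1 / p)) ^ p ∂μ) ^ (1 / p) * (∫ x, (w x ^ (1 / q) * g x) ^ q ∂μ) ^ (1 / q) :=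
        integral_mul_le_Lp_mul_Lq_of_nonneg hpq hU0 hV0 hU hV
    _ = _ := by rw [integral_congr_ae hUp, integral_congr_ae hVq, one_div_div]

theorem integral_sub_mul_affine (u v d c₀ c₁ : ℝ) :
    ∫ x in u..v, (x - d) * (c₀ + c₁ * x) =
      (c₁ * v ^ 3 / 3 + (c₀ - c₁ * d) * v ^ 2 / 2 - d * c₀ * v) -
        (c₁ * u ^ 3 / 3 + (c₀ - c₁ * d) * u ^ 2 / 2 - d * c₀ * u) := by
  have hF : ∀ x ∈ uIcc u v, HasDerivAt
      (fun y => c₁ * y ^ 3 / 3 + (c₀ - c₁ * d) * y ^ 2 / 2 - d * c₀ * y)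
      ((x - d) * (c₀ + c₁ * x)) x := by
    intro x _
    have h3 : HasDerivAt (fun y : ℝ => y ^ 3) (3 * x ^ 2) x := by simpa using hasDerivAt_pow 3 x
    have h2 : HasDerivAt (fun y : ℝ => y ^ 2) (2 * x) x := by simpa using hasDerivAt_pow 2 x
    exact ((((h3.const_mul c₁).div_const 3).add ((h2.const_mul (c₀ - c₁ * d)).div_const 2)).sub
      ((hasDerivAt_id x).const_mul (d * c₀))).congr_deriv (by ring)
  exact intervalIntegral.integral_eq_sub_of_hasDerivAt hF
    ((by fun_prop : Continuous fun x => (x - d) * (c₀ + c₁ * x)).intervalIntegrable u v)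

theorem integral_abs_sub_mul_affine {a b d : ℝ} (had : a ≤ d) (hdb : d ≤ b) (c₀ c₁ : ℝ) :
    ∫ x in a..b, |x - d| * (c₀ + c₁ * x) =
      (c₀ + c₁ * d) * ((d - a) ^ 2 + (b - d) ^ 2) / 2 + c₁ * ((b - d) ^ 3 - (d - a) ^ 3) / 3 := by
  have hcont : Continuous fun x => |x - d| * (c₀ + c₁ * x) := by fun_prop
  rw [← intervalIntegral.integral_add_adjacent_intervals (hcont.intervalIntegrable a d)
    (hcont.intervalIntegrable d b)]
  have hleft : ∫ x in a..d, |x - d| * (c₀ + c₁ * x) = -∫ x in a..d, (x - d) * (c₀ + c₁ * x) := by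
    rw [← intervalIntegral.integral_neg]
    refine intervalIntegral.integral_congr fun x hx => ?_
    rw [uIcc_of_le had] at hx
    simp only [abs_of_nonpos (sub_nonpos.2 hx.2), neg_mul]
  have hright : ∫ x in d..b, |x - d| * (c₀ + c₁ * x) = ∫ x in d..b, (x - d) * (c₀ + c₁ * x) := by
    refine intervalIntegral.integral_congr fun x hx => ?_
    rw [uIcc_of_le hdb] at hx
    simp only [abs_of_nonneg (sub_nonneg.2 hx.1)]
  rw [hleft, hright, integral_sub_mul_affine, integral_sub_mul_affine]
  ring

theorem integral_sub_mul_deriv {f f' : ℝ → ℝ} {a b : ℝ} (d : ℝ)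
    (hf : ∀ x ∈ uIcc a b, HasDerivAt f (f' x) x) (hint : IntervalIntegrable f' volume a b) :
    ∫ x in a..b, (x - d) * f' x = (b - d) * f b - (a - d) * f a - ∫ x in a..b, f x := by
  simpa using intervalIntegral.integral_mul_deriv_eq_deriv_mul
    (fun x _ => (hasDerivAt_id x).sub_const d) hf intervalIntegrable_const hint

theorem abs_sub_integral_le_of_convexOn {f f' : ℝ → ℝ} {a b q : ℝ} (hab : a < b)
    (hf : ∀ x ∈ Icc a b, HasDerivAt f (f' x) x) (hint : IntervalIntegrable f' volume a b)
    (hq : 1 ≤ q) (hconv : ConvexOn ℝ (Icc a b) fun x => |f' x| ^ q) (d : ℝ) :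
    |(b - d) * f b - (a - d) * f a - ∫ x in a..b, f x| ≤
      (∫ x in a..b, |x - d|) ^ ((q - 1) / q) *
        (∫ x in a..b, |x - d| * (((b - x) * |f' a| ^ q + (x - a) * |f' b| ^ q) / (b - a))) ^
          (1 / q) := by
  set L : ℝ → ℝ := fun x => ((b - x) * |f' a| ^ q + (x - a) * |f' b| ^ q) / (b - a)
  have hq0 : 0 < q := zero_lt_one.trans_le hq
  have hfL : ∀ x ∈ Icc a b, |f' x| ^ q ≤ L x := fun x hx => hconv.le_chord_of_mem_Icc hab hx
  have hL0 : ∀ x ∈ Icc a b, 0 ≤ L x := fun x hx =>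
    (Real.rpow_nonneg (abs_nonneg _) q).trans (hfL x hx)
  have hLc : Continuous L := by fun_prop
  have hLq : Continuous fun x => L x ^ (1 / q) := hLc.rpow_const fun _ => Or.inr (by positivity)
  have hw : Continuous fun x : ℝ => |x - d| := by fun_prop
  have habs_f' : ∀ x ∈ Icc a b, |f' x| ≤ L x ^ (1 / q) := fun x hx => by
    calc |f' x| = (|f' x| ^ q) ^ (1 / q) := by
          rw [← Real.rpow_mul (abs_nonneg _), mul_one_div_cancel hq0.ne', Real.rpow_one]
      _ ≤ L x ^ (1 / q) := by gcongr; exact hfL x hx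
  have hLq_pow : ∀ x ∈ Icc a b, (L x ^ (1 / q)) ^ q = L x := fun x hx => by
    rw [← Real.rpow_mul (hL0 x hx), one_div_mul_cancel hq0.ne', Real.rpow_one]
  rw [← integral_sub_mul_deriv d (by rwa [uIcc_of_le hab.le]) hint]
  calc |∫ x in a..b, (x - d) * f' x| ≤ ∫ x in a..b, |x - d| * |f' x| := by
        simpa only [abs_mul] using
          intervalIntegral.abs_integral_le_integral_abs (f := fun x => (x - d) * f' x) hab.le
    _ ≤ ∫ x in a..b, |x - d| * L x ^ (1 / q) :=
        intervalIntegral.integral_mono_on hab.le (hint.abs.continuousOn_mul hw.continuousOn)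
          ((hw.mul hLq).intervalIntegrable a b)
          fun x hx => mul_le_mul_of_nonneg_left (habs_f' x hx) (abs_nonneg _)
    _ ≤ _ := by
        simp only [intervalIntegral.integral_of_le hab.le]
        have hmem : ∀ᵐ x ∂volume.restrict (Ioc a b), x ∈ Icc a b :=
          (ae_restrict_mem measurableSet_Ioc).mono fun x hx => Ioc_subset_Icc_self hx
        refine (integral_weighted_le_rpow_mul_rpow hq (.of_forall fun x => abs_nonneg _)
          (hmem.mono fun x hx => Real.rpow_nonneg (hL0 x hx) _) hw.integrableOn_Ioc
          hLq.aestronglyMeasurable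
          ((hw.mul (hLq.rpow_const fun _ => Or.inr hq0.le)).integrableOn_Ioc)).trans_eq ?_
        congr 2
        exact integral_congr_ae (hmem.mono fun x hx => by dsimp only; rw [hLq_pow x hx])

theorem abs_weighted_mean_sub_average_le {f f' : ℝ → ℝ} {a b lam mu q : ℝ} (hab : a < b)
    (hf : ∀ x ∈ Icc a b, HasDerivAt f (f' x) x) (hint : IntervalIntegrable f' volume a b)
    (hlam : 0 ≤ lam) (hmu : 0 ≤ mu) (hlm : 0 < lam + mu) (hq : 1 ≤ q)
    (hconv : ConvexOn ℝ (Icc a b) fun x => |f' x| ^ q) :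
    |(lam * f a + mu * f b) / (lam + mu) - 1 / (b - a) * ∫ x in a..b, f x| ≤
      (b - a) / (lam + mu) * ((lam ^ 2 + mu ^ 2) / (2 * (lam + mu))) ^ ((q - 1) / q) *
        ((2 * lam ^ 3 + 3 * lam ^ 2 * mu + mu ^ 3) / (6 * (lam + mu) ^ 2) * |f' a| ^ q +
          (2 * mu ^ 3 + 3 * mu ^ 2 * lam + lam ^ 3) / (6 * (lam + mu) ^ 2) * |f' b| ^ q) ^
            (1 / q) := by
  have hba : 0 < b - a := sub_pos.2 hab
  have hq0 : 0 < q := zero_lt_one.trans_le hq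
  -- `d` makes the boundary terms of the integration by parts `b - a` times the weighted mean
  obtain ⟨d, hd⟩ : ∃ d, d = (lam * b + mu * a) / (lam + mu) := ⟨_, rfl⟩
  have had : a ≤ d := by rw [hd, le_div_iff₀ hlm]; nlinarith
  have hdb : d ≤ b := by rw [hd, div_le_iff₀ hlm]; nlinarith
  set X := (b - a) ^ 2 / (lam + mu) with hX
  set S := (lam ^ 2 + mu ^ 2) / (2 * (lam + mu))
  set K := (2 * lam ^ 3 + 3 * lam ^ 2 * mu + mu ^ 3) / (6 * (lam + mu) ^ 2) * |f' a| ^ q +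
    (2 * mu ^ 3 + 3 * mu ^ 2 * lam + lam ^ 3) / (6 * (lam + mu) ^ 2) * |f' b| ^ q
  have hmean : (lam * f a + mu * f b) / (lam + mu) - 1 / (b - a) * ∫ x in a..b, f x =
      1 / (b - a) * ((b - d) * f b - (a - d) * f a - ∫ x in a..b, f x) := by
    rw [hd]; field_simp; ring
  have hw : ∫ x in a..b, |x - d| = X * S := by
    calc ∫ x in a..b, |x - d| = ∫ x in a..b, |x - d| * (1 + 0 * x) := by simp
      _ = X * S := by
          rw [integral_abs_sub_mul_affine had hdb, hd]; simp only [X, S]; field_simp; ring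
  have hwL : ∫ x in a..b, |x - d| * (((b - x) * |f' a| ^ q + (x - a) * |f' b| ^ q) / (b - a)) =
      X * K := by
    calc _ = ∫ x in a..b, |x - d| * ((b * |f' a| ^ q - a * |f' b| ^ q) / (b - a) +
            (|f' b| ^ q - |f' a| ^ q) / (b - a) * x) := by
          congr with x; field_simp; ring
      _ = X * K := by
          rw [integral_abs_sub_mul_affine had hdb, hd]; simp only [X, K]; field_simp; ring
  rw [hmean, abs_mul, abs_of_pos (by positivity)]
  calc 1 / (b - a) * |(b - d) * f b - (a - d) * f a - ∫ x in a..b, f x|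
      ≤ 1 / (b - a) * ((X * S) ^ ((q - 1) / q) * (X * K) ^ (1 / q)) := by
        rw [← hw, ← hwL]; gcongr
        exact abs_sub_integral_le_of_convexOn hab hf hint hq hconv d
    _ = 1 / (b - a) * (X ^ ((q - 1) / q) * X ^ (1 / q)) * S ^ ((q - 1) / q) * K ^ (1 / q) := by
        rw [Real.mul_rpow (by positivity) (by positivity),
          Real.mul_rpow (by positivity) (by positivity)]
        ring
    _ = _ := by
        have hexp : (q - 1) / q + 1 / q = 1 := by rw [← add_div, sub_add_cancel, div_self hq0.ne']
        rw [← Real.rpow_add' (by positivity) (by rw [hexp]; exact one_ne_zero), hexp,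
          Real.rpow_one, hX]
        field_simp

theorem stmt_2_general (I : Set ℝ) (hI : Convex ℝ I)
    (f f' : ℝ → ℝ) (a b : ℝ) (ha : a ∈ interior I) (hb : b ∈ interior I) (hab : a < b)
    (hf : ∀ x ∈ interior I, HasDerivAt f (f' x) x)
    (hint : IntervalIntegrable f' volume a b)
    (lam mu : ℝ) (hlam : 0 ≤ lam) (hmu : 0 ≤ mu) (hlm : 0 < lam + mu)
    (q : ℝ) (hq : 1 ≤ q)
    (hconv : ConvexOn ℝ (Set.Icc a b) (fun x => |f' x| ^ q))
    (γ1 γ2 γ3 γ4 : ℝ)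
    (hγ1 : γ1 = (1 / 6) * (2 * lam ^ 3 / (lam + mu) ^ 2 + 2 * mu - lam))
    (hγ2 : γ2 = (lam ^ 2 + mu ^ 2) / (2 * (lam + mu)) - γ1)
    (hγ3 : γ3 = (1 / 6) * (2 * mu ^ 3 / (lam + mu) ^ 2 + 2 * lam - mu))
    (hγ4 : γ4 = (lam ^ 2 + mu ^ 2) / (2 * (lam + mu)) - γ3) :
    |(lam * f a + mu * f b) / (lam + mu) - (1 / (b - a)) * (∫ x in a..b, f x)| ≤
      ((b - a) / (lam + mu)) * ((lam ^ 2 + mu ^ 2) / (2 * (lam + mu))) ^ ((q - 1) / q) *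
        min ((γ1 * |f' b| ^ q + γ2 * |f' a| ^ q) ^ (1 / q))
            ((γ3 * |f' a| ^ q + γ4 * |f' b| ^ q) ^ (1 / q)) := by
  have hIcc : Icc a b ⊆ interior I := hI.interior.ordConnected.out ha hb
  have hγ3' : γ3 = (2 * lam ^ 3 + 3 * lam ^ 2 * mu + mu ^ 3) / (6 * (lam + mu) ^ 2) := by
    rw [hγ3]; field_simp; ring
  have hγ4' : γ4 = (2 * mu ^ 3 + 3 * mu ^ 2 * lam + lam ^ 3) / (6 * (lam + mu) ^ 2) := by
    rw [hγ4, hγ3]; field_simp; ring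
  have hmin_eq : γ1 * |f' b| ^ q + γ2 * |f' a| ^ q = γ3 * |f' a| ^ q + γ4 * |f' b| ^ q := by
    rw [hγ2, hγ4, hγ1, hγ3]; field_simp; ring
  rw [hmin_eq, min_self, hγ3', hγ4']
  exact abs_weighted_mean_sub_average_le hab (fun x hx => hf x (hIcc hx)) hint hlam hmu hlm hq
    hconv

/-- Corollary: the case `m = α = 1` of Theorem 2.2 of the paper. -/
theorem stmt_2 (I : Set ℝ) (hI : Convex ℝ I) (hI0 : I ⊆ Set.Ici (0:ℝ))
    (f f' : ℝ → ℝ) (a b : ℝ) (ha : a ∈ interior I) (hb : b ∈ interior I) (hab : a < b)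
    (hf : ∀ x ∈ interior I, HasDerivAt f (f' x) x)
    (hint : IntervalIntegrable f' volume a b)
    (lam mu : ℝ) (hlam : 0 ≤ lam) (hmu : 0 ≤ mu) (hlm : 0 < lam + mu)
    (q : ℝ) (hq : 1 ≤ q)
    (hconv : ConvexOn ℝ (Set.Icc a b) (fun x => |f' x| ^ q))
    (γ1 γ2 γ3 γ4 : ℝ)
    (hγ1 : γ1 = (1 / 6) * (2 * lam ^ 3 / (lam + mu) ^ 2 + 2 * mu - lam))
    (hγ2 : γ2 = (lam ^ 2 + mu ^ 2) / (2 * (lam + mu)) - γ1)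
    (hγ3 : γ3 = (1 / 6) * (2 * mu ^ 3 / (lam + mu) ^ 2 + 2 * lam - mu))
    (hγ4 : γ4 = (lam ^ 2 + mu ^ 2) / (2 * (lam + mu)) - γ3) :
    |(lam * f a + mu * f b) / (lam + mu) - (1 / (b - a)) * (∫ x in a..b, f x)| ≤
      ((b - a) / (lam + mu)) * ((lam ^ 2 + mu ^ 2) / (2 * (lam + mu))) ^ ((q - 1) / q) *
        min ((γ1 * |f' b| ^ q + γ2 * |f' a| ^ q) ^ (1 / q))
            ((γ3 * |f' a| ^ q + γ4 * |f' b| ^ q) ^ (1 / q)) :=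
  stmt_2_general I hI f f' a b ha hb hab hf hint lam mu hlam hmu hlm q hq hconv γ1 γ2 γ3 γ4 hγ1 hγ2
    hγ3 hγ4
end

section
/- Let f : [0,∞) → ℝ be (α,m)-convex with (α,m) ∈ (0,1]², let 0 ≤ a < b < ∞, and suppose f is integrable on [a,b]. Then (1/(b−a)) ∫_a^b f(x) dx ≤ min{ [f(a) + α m f(b/m)]/(α+1), [f(b) + α m f(a/m)]/(α+1) }. -/
open MeasureTheory

/-- A function `g` is `(α, m)`-convex on a set `s`. -/
def AMConvexOn (α m : ℝ) (s : Set ℝ) (g : ℝ → ℝ) : Prop :=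
  ∀ x ∈ s, ∀ y ∈ s, ∀ t ∈ Set.Icc (0:ℝ) 1,
    g (t * x + m * (1 - t) * y) ≤ t ^ α * g x + m * (1 - t ^ α) * g y

/-!
Substituting `x = (c - d) t + d` turns the mean of `f` over the interval between `d` and `c` into
`∫₀¹ f ((c - d) t + d) dt`. Since `(c - d) t + d = t c + m (1 - t) (d / m)`, `(α, m)`-convexity
bounds the integrand by `t ^ α f c + m (1 - t ^ α) f (d / m)`, and `∫₀¹ t ^ α dt = 1 / (α + 1)`
gives the bound `(f c + α m f (d / m)) / (α + 1)`. The two bounds of the theorem are the two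
choices `(c, d) = (a, b)` and `(c, d) = (b, a)`.
-/

theorem interval_average_eq_integral_comp_mul_add (f : ℝ → ℝ) {c d : ℝ} (hcd : c ≠ d) :
    ⨍ x in d..c, f x = ∫ t in (0:ℝ)..1, f ((c - d) * t + d) := by
  rw [intervalIntegral.integral_comp_mul_add f (sub_ne_zero.mpr hcd), interval_average_eq]
  simp

theorem IntervalIntegrable.comp_mul_add_unitInterval {f : ℝ → ℝ} {c d : ℝ} (hcd : c ≠ d)
    (hf : IntervalIntegrable f volume d c) :
    IntervalIntegrable (fun t => f ((c - d) * t + d)) volume 0 1 := by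
  have hcd' : c - d ≠ 0 := sub_ne_zero.mpr hcd
  simpa [hcd'] using (hf.comp_add_right d).comp_mul_left (c := c - d)

theorem integral_rpow_mul_add_mul_one_sub_rpow {α : ℝ} (hα : -1 < α) (m u v : ℝ) :
    ∫ t in (0:ℝ)..1, (t ^ α * u + m * (1 - t ^ α) * v) = (u + α * m * v) / (α + 1) := by
  have hrpow : IntervalIntegrable (fun t : ℝ => t ^ α) volume 0 1 :=
    intervalIntegral.intervalIntegrable_rpow' hα
  have hα1 : α + 1 ≠ 0 := by linarith
  have h_rpow : ∫ t in (0:ℝ)..1, t ^ α = 1 / (α + 1) := by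
    rw [integral_rpow (Or.inl hα), Real.one_rpow, Real.zero_rpow hα1]
    ring
  have h_affine : ∀ t : ℝ, t ^ α * u + m * (1 - t ^ α) * v = t ^ α * (u - m * v) + m * v :=
    fun t => by ring
  simp only [h_affine]
  rw [intervalIntegral.integral_add (hrpow.mul_const _) intervalIntegrable_const,
    intervalIntegral.integral_mul_const, h_rpow, intervalIntegral.integral_const]
  field_simp
  ring

theorem AMConvexOn.le_of_mem_Icc {α m : ℝ} {f : ℝ → ℝ} (hf : AMConvexOn α m (Set.Ici 0) f)
    (hm : 0 < m) {c d : ℝ} (hc : 0 ≤ c) (hd : 0 ≤ d) {t : ℝ} (ht : t ∈ Set.Icc (0:ℝ) 1) :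
    f ((c - d) * t + d) ≤ t ^ α * f c + m * (1 - t ^ α) * f (d / m) := by
  have h := hf c hc (d / m) (div_nonneg hd hm.le) t ht
  rwa [show t * c + m * (1 - t) * (d / m) = (c - d) * t + d by field_simp; ring] at h

theorem AMConvexOn.interval_average_le {α m : ℝ} {f : ℝ → ℝ}
    (hf : AMConvexOn α m (Set.Ici 0) f) (hα : -1 < α) (hm : 0 < m) {c d : ℝ} (hc : 0 ≤ c)
    (hd : 0 ≤ d) (hcd : c ≠ d) (hint : IntervalIntegrable f volume d c) :
    ⨍ x in d..c, f x ≤ (f c + α * m * f (d / m)) / (α + 1) := by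
  have hrpow : IntervalIntegrable (fun t : ℝ => t ^ α) volume 0 1 :=
    intervalIntegral.intervalIntegrable_rpow' hα
  have hbound : IntervalIntegrable (fun t : ℝ => t ^ α * f c + m * (1 - t ^ α) * f (d / m))
      volume 0 1 :=
    (hrpow.mul_const _).add (((intervalIntegrable_const.sub hrpow).const_mul m).mul_const _)
  rw [interval_average_eq_integral_comp_mul_add f hcd,
    ← integral_rpow_mul_add_mul_one_sub_rpow hα]
  exact intervalIntegral.integral_mono_on zero_le_one (hint.comp_mul_add_unitInterval hcd) hbound
    fun t ht => hf.le_of_mem_Icc hm hc hd ht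

/-- Theorem 1.2 of the paper (Hermite–Hadamard type inequality for `(α, m)`-convex
functions). -/
theorem stmt_9 (f : ℝ → ℝ)
    (α m : ℝ) (hα : α ∈ Set.Ioc (0:ℝ) 1) (hm : m ∈ Set.Ioc (0:ℝ) 1)
    (hconv : AMConvexOn α m (Set.Ici 0) f)
    (a b : ℝ) (ha : 0 ≤ a) (hab : a < b)
    (hint : IntegrableOn f (Set.Icc a b)) :
    (1 / (b - a)) * (∫ x in a..b, f x) ≤
      min ((f a + α * m * f (b / m)) / (α + 1))
          ((f b + α * m * f (a / m)) / (α + 1)) := by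
  have hb : 0 ≤ b := ha.trans hab.le
  have hα' : -1 < α := by linarith [hα.1]
  have hint' : IntervalIntegrable f volume a b :=
    (intervalIntegrable_iff_integrableOn_Icc_of_le hab.le).mpr hint
  have h_avg : (1 / (b - a)) * (∫ x in a..b, f x) = ⨍ x in a..b, f x := by
    rw [interval_average_eq, smul_eq_mul, one_div]
  rw [h_avg]
  refine le_min ?_ ?_
  · rw [interval_average_symm]
    exact hconv.interval_average_le hα' hm.1 ha hb hab.ne hint'.symm
  · exact hconv.interval_average_le hα' hm.1 hb ha hab.ne' hint'
end

section
/- Let 0 < a < b and let n ∈ ℤ with |n| ≥ 2. For λ, μ ∈ [0,∞) with λ + μ > 0 and q > 1 with 1/p + 1/q = 1, |A_{λ/(λ+μ)}(aⁿ, bⁿ) − Lₙⁿ(a,b)| ≤ ((b−a)/(λ+μ)) · ((λ^{p+1} + μ^{p+1})/(λ+μ))^{1/p} · (1/(p+1))^{1/p} · |n| · A(a^{(n−1)q}, b^{(n−1)q})^{1/q}. -/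
/-!
Integrating by parts along the segment `t ↦ t a + (1 - t) b` turns the gap between the weighted
mean `(1 - c) f a + c f b` and the integral mean of `f` into
`(a - b) ∫₀¹ (t - c) f'(t a + (1 - t) b) dt`. Hölder's inequality splits this into the explicit
moment `∫₀¹ |t - c|^p` and `∫₀¹ |f'|^q` along the segment, which convexity of `|f'|^q` bounds by
the mean of its endpoint values (the right half of Hermite–Hadamard). For `f = xⁿ` on `[a, b]`
with `a > 0`, `|f'|^q = |n|^q x^{(n-1)q}` is convex, and the weight is `c = μ/(λ+μ)`.
-/

open MeasureTheory Set

lemma ContinuousOn.memLp_restrict_Ioc {f : ℝ → ℝ} {a b : ℝ} (hf : ContinuousOn f (Icc a b))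
    (p : ENNReal) : MemLp f p (volume.restrict (Ioc a b)) := by
  obtain ⟨C, hC⟩ := isCompact_Icc.exists_bound_of_continuousOn hf
  exact MemLp.of_bound ((hf.mono Ioc_subset_Icc_self).aestronglyMeasurable measurableSet_Ioc) C
    (ae_restrict_of_forall_mem measurableSet_Ioc fun x hx => hC x (Ioc_subset_Icc_self hx))

lemma abs_intervalIntegral_mul_le_Lp_mul_Lq {p q : ℝ} (hpq : p.HolderConjugate q) {f g : ℝ → ℝ}
    {a b : ℝ} (hab : a ≤ b) (hf : ContinuousOn f (Icc a b)) (hg : ContinuousOn g (Icc a b)) :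
    |∫ x in a..b, f x * g x| ≤
      (∫ x in a..b, |f x| ^ p) ^ (1 / p) * (∫ x in a..b, |g x| ^ q) ^ (1 / q) := by
  simp only [intervalIntegral.integral_of_le hab]
  calc |∫ x in Ioc a b, f x * g x| ≤ ∫ x in Ioc a b, |f x| * |g x| := by
        simp only [← abs_mul]; exact abs_integral_le_integral_abs
    _ ≤ _ := integral_mul_le_Lp_mul_Lq_of_nonneg hpq (.of_forall fun _ => abs_nonneg _)
        (.of_forall fun _ => abs_nonneg _) (hf.abs.memLp_restrict_Ioc _)
        (hg.abs.memLp_restrict_Ioc _)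

lemma integral_abs_sub_rpow {p c : ℝ} (hp : 0 ≤ p) (hc0 : 0 ≤ c) (hc1 : c ≤ 1) :
    ∫ t in (0 : ℝ)..1, |t - c| ^ p = (c ^ (p + 1) + (1 - c) ^ (p + 1)) / (p + 1) := by
  have hp1 : p + 1 ≠ 0 := by positivity
  have hint : ∀ u v : ℝ, IntervalIntegrable (fun t => |t - c| ^ p) volume u v := fun u v =>
    (continuous_id.sub continuous_const).abs.rpow_const (fun _ => Or.inr hp)
      |>.intervalIntegrable u v
  have h_left : ∫ t in (0 : ℝ)..c, |t - c| ^ p = c ^ (p + 1) / (p + 1) := by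
    rw [intervalIntegral.integral_congr (g := fun t => (c - t) ^ p) fun t ht => by
      rw [uIcc_of_le hc0] at ht
      simp only [abs_of_nonpos (sub_nonpos.2 ht.2), neg_sub]]
    simp [intervalIntegral.integral_comp_sub_left (fun x => x ^ p) c, integral_rpow,
      Real.zero_rpow hp1, hp.trans_lt' neg_one_lt_zero]
  have h_right : ∫ t in c..1, |t - c| ^ p = (1 - c) ^ (p + 1) / (p + 1) := by
    rw [intervalIntegral.integral_congr (g := fun t => (t - c) ^ p) fun t ht => by
      rw [uIcc_of_le hc1] at ht
      simp only [abs_of_nonneg (sub_nonneg.2 ht.1)]]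
    simp [intervalIntegral.integral_comp_sub_right (fun x => x ^ p) c, integral_rpow,
      Real.zero_rpow hp1, hp.trans_lt' neg_one_lt_zero]
  rw [← intervalIntegral.integral_add_adjacent_intervals (hint 0 c) (hint c 1), h_left, h_right,
    add_div]

lemma combo_mem_Icc {a b t : ℝ} (hab : a ≤ b) (ht : t ∈ Icc (0 : ℝ) 1) :
    t * a + (1 - t) * b ∈ Icc a b := by
  simpa only [smul_eq_mul] using convex_Icc a b (left_mem_Icc.2 hab) (right_mem_Icc.2 hab)
    ht.1 (sub_nonneg.2 ht.2) (add_sub_cancel t 1)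

lemma integral_comp_combo (f : ℝ → ℝ) {a b : ℝ} (hab : a ≠ b) :
    ∫ t in (0 : ℝ)..1, f (t * a + (1 - t) * b) = (∫ x in a..b, f x) / (b - a) := by
  simp_rw [show ∀ t, t * a + (1 - t) * b = (a - b) * t + b by intro t; ring]
  rw [intervalIntegral.integral_comp_mul_add f (sub_ne_zero.2 hab), mul_zero, zero_add,
    mul_one, sub_add_cancel, intervalIntegral.integral_symm, smul_eq_mul]
  field_simp
  ring

lemma combo_sub_integral_div_eq {f f' : ℝ → ℝ} {a b : ℝ} (hab : a < b)
    (hf : ∀ x ∈ Icc a b, HasDerivAt f (f' x) x) (hf' : ContinuousOn f' (Icc a b)) (c : ℝ) :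
    (1 - c) * f a + c * f b - (∫ x in a..b, f x) / (b - a) =
      (a - b) * ∫ t in (0 : ℝ)..1, (t - c) * f' (t * a + (1 - t) * b) := by
  set γ : ℝ → ℝ := fun t => t * a + (1 - t) * b
  have hγ : ∀ t ∈ uIcc (0 : ℝ) 1, γ t ∈ Icc a b := fun t ht =>
    combo_mem_Icc hab.le (by rwa [uIcc_of_le zero_le_one] at ht)
  have hγ' : ∀ t, HasDerivAt γ (a - b) t := fun t => by
    rw [show γ = fun t => (a - b) * t + b by ext; ring]
    simpa using ((hasDerivAt_id t).const_mul (a - b)).add_const b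
  have hparts := intervalIntegral.integral_mul_deriv_eq_deriv_mul
    (u := fun t => t - c) (u' := fun _ => 1) (v := f ∘ γ) (v' := fun t => f' (γ t) * (a - b))
    (fun t _ => (hasDerivAt_id t).sub_const c) (fun t ht => (hf _ (hγ t ht)).comp t (hγ' t))
    intervalIntegrable_const
    ((hf'.comp (by fun_prop) hγ).mul continuousOn_const).intervalIntegrable
  rw [← intervalIntegral.integral_const_mul, ← integral_comp_combo f hab.ne]
  simp only [Function.comp_apply, one_mul, γ] at hparts
  convert hparts.symm using 2
  · simp
  · ext t; ring

lemma ConvexOn.integral_comp_combo_le {φ : ℝ → ℝ} {a b : ℝ} (hab : a ≤ b)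
    (hφ : ConvexOn ℝ (Icc a b) φ) (hφc : ContinuousOn φ (Icc a b)) :
    ∫ t in (0 : ℝ)..1, φ (t * a + (1 - t) * b) ≤ (φ a + φ b) / 2 := by
  have hchord : ∫ t in (0 : ℝ)..1, t * φ a + (1 - t) * φ b = (φ a + φ b) / 2 := by
    rw [intervalIntegral.integral_add (Continuous.intervalIntegrable (by fun_prop) _ _)
      (Continuous.intervalIntegrable (by fun_prop) _ _)]
    simp only [intervalIntegral.integral_mul_const, integral_id,
      intervalIntegral.integral_comp_sub_left (fun t => t), sub_self, sub_zero]
    norm_num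
    ring
  rw [← hchord]
  refine intervalIntegral.integral_mono_on zero_le_one
    ((hφc.comp (by fun_prop) fun t ht => combo_mem_Icc hab ht).intervalIntegrable_of_Icc
      zero_le_one) (Continuous.intervalIntegrable (by fun_prop) _ _) fun t ht => ?_
  simpa only [smul_eq_mul] using hφ.2 (left_mem_Icc.2 hab) (right_mem_Icc.2 hab) ht.1
    (sub_nonneg.2 ht.2) (add_sub_cancel t 1)

lemma ConvexOn.rpow {s : Set ℝ} {g : ℝ → ℝ} (hg : ConvexOn ℝ s g) (hg₀ : ∀ x ∈ s, 0 ≤ g x)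
    {q : ℝ} (hq : 1 ≤ q) : ConvexOn ℝ s fun x => g x ^ q := by
  refine ⟨hg.1, fun x hx y hy α β hα hβ hαβ => ?_⟩
  calc g (α • x + β • y) ^ q ≤ (α • g x + β • g y) ^ q :=
        Real.rpow_le_rpow (hg₀ _ (hg.1 hx hy hα hβ hαβ)) (hg.2 hx hy hα hβ hαβ) (by linarith)
    _ ≤ α • g x ^ q + β • g y ^ q := (convexOn_rpow hq).2 (hg₀ x hx) (hg₀ y hy) hα hβ hαβ

theorem abs_combo_sub_integral_div_le {p q : ℝ} (hpq : p.HolderConjugate q) {f f' : ℝ → ℝ}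
    {a b c : ℝ} (hab : a < b) (hc0 : 0 ≤ c) (hc1 : c ≤ 1)
    (hf : ∀ x ∈ Icc a b, HasDerivAt f (f' x) x) (hf' : ContinuousOn f' (Icc a b))
    (hconv : ConvexOn ℝ (Icc a b) fun x => |f' x| ^ q) :
    |(1 - c) * f a + c * f b - (∫ x in a..b, f x) / (b - a)| ≤
      (b - a) * ((c ^ (p + 1) + (1 - c) ^ (p + 1)) / (p + 1)) ^ (1 / p) *
        ((|f' a| ^ q + |f' b| ^ q) / 2) ^ (1 / q) := by
  have hγ : ContinuousOn (fun t : ℝ => t * a + (1 - t) * b) (Icc 0 1) := by fun_prop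
  have hf'γ : ContinuousOn (fun t => f' (t * a + (1 - t) * b)) (Icc 0 1) :=
    hf'.comp hγ fun t ht => combo_mem_Icc hab.le ht
  have hholder := abs_intervalIntegral_mul_le_Lp_mul_Lq hpq zero_le_one
    (f := fun t => t - c) (by fun_prop) hf'γ
  have hhadamard := hconv.integral_comp_combo_le hab.le (hf'.abs.rpow_const fun _ _ =>
    Or.inr hpq.symm.nonneg)
  have hnonneg : ∀ (g : ℝ → ℝ) (r : ℝ), 0 ≤ ∫ t in (0 : ℝ)..1, |g t| ^ r := fun g r =>
    intervalIntegral.integral_nonneg zero_le_one fun t _ => by positivity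
  rw [combo_sub_integral_div_eq hab hf hf' c, abs_mul, abs_sub_comm, abs_of_pos (sub_pos.2 hab),
    mul_assoc, ← integral_abs_sub_rpow hpq.nonneg hc0 hc1]
  gcongr
  exact hholder.trans (mul_le_mul_of_nonneg_left
    (Real.rpow_le_rpow (hnonneg _ q) hhadamard hpq.symm.one_div_nonneg)
    (Real.rpow_nonneg (hnonneg _ p) _))

lemma convexOn_abs_mul_zpow_rpow {a b : ℝ} (ha : 0 < a) (n m : ℤ) {q : ℝ} (hq : 1 ≤ q) :
    ConvexOn ℝ (Icc a b) fun x : ℝ => |n * x ^ m| ^ q := by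
  have hpos : ∀ x ∈ Icc a b, 0 < x := fun x hx => ha.trans_le hx.1
  refine (((convexOn_zpow m).subset (fun x hx => hpos x hx) (convex_Icc a b)).smul
    (abs_nonneg (n : ℝ))).rpow
    (fun x hx => smul_nonneg (abs_nonneg _) (zpow_pos (hpos x hx) m).le) hq |>.congr fun x hx => ?_
  simp [abs_mul, abs_of_pos (zpow_pos (hpos x hx) m)]

lemma rpow_moment_div_eq {lam mu p : ℝ} (hlam : 0 ≤ lam) (hmu : 0 ≤ mu) (hlm : 0 < lam + mu)
    (hp : 0 < p) :
    (((mu / (lam + mu)) ^ (p + 1) + (lam / (lam + mu)) ^ (p + 1)) / (p + 1)) ^ (1 / p) =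
      1 / (lam + mu) * ((lam ^ (p + 1) + mu ^ (p + 1)) / (lam + mu)) ^ (1 / p) *
        (1 / (p + 1)) ^ (1 / p) := by
  set s := lam + mu
  have hsum : ((mu / s) ^ (p + 1) + (lam / s) ^ (p + 1)) / (p + 1) =
      (1 / s) ^ p * ((lam ^ (p + 1) + mu ^ (p + 1)) / s) * (1 / (p + 1)) := by
    rw [Real.div_rpow hmu hlm.le, Real.div_rpow hlam hlm.le, Real.div_rpow zero_le_one hlm.le,
      Real.one_rpow, Real.rpow_add_one hlm.ne']
    field_simp
    ring
  rw [hsum, Real.mul_rpow (by positivity) (by positivity),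
    Real.mul_rpow (by positivity) (by positivity), ← Real.rpow_mul (by positivity),
    mul_one_div_cancel hp.ne', Real.rpow_one]

lemma rpow_mean_abs_mul_zpow {a b : ℝ} (ha : 0 < a) (hb : 0 < b) (n m : ℤ) {q : ℝ} (hq : 0 < q) :
    ((|n * a ^ m| ^ q + |n * b ^ m| ^ q) / 2) ^ (1 / q) =
      |(n : ℝ)| * ((a ^ ((m : ℝ) * q) + b ^ ((m : ℝ) * q)) / 2) ^ (1 / q) := by
  have hpow : ∀ x : ℝ, 0 < x → |n * x ^ m| ^ q = |(n : ℝ)| ^ q * x ^ ((m : ℝ) * q) := fun x hx => by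
    rw [abs_mul, abs_of_pos (zpow_pos hx m), Real.mul_rpow (abs_nonneg _) (zpow_pos hx m).le,
      Real.rpow_mul hx.le, Real.rpow_intCast]
  rw [hpow a ha, hpow b hb, ← mul_add, mul_div_assoc, Real.mul_rpow (by positivity) (by positivity),
    ← Real.rpow_mul (abs_nonneg _), mul_one_div_cancel hq.ne', Real.rpow_one]

/-- Proposition 3.3 of the paper: application to special means, where
`A(x,y) = (x+y)/2` and `Lₙⁿ(a,b) = (b^{n+1} - a^{n+1})/((n+1)(b-a))`. -/
theorem stmt_12 (a b : ℝ) (ha : 0 < a) (hab : a < b)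
    (n : ℤ) (hn : 2 ≤ |n|)
    (lam mu : ℝ) (hlam : 0 ≤ lam) (hmu : 0 ≤ mu) (hlm : 0 < lam + mu)
    (p q : ℝ) (hq : 1 < q) (hpq : 1 / p + 1 / q = 1) :
    |(lam / (lam + mu)) * a ^ n + (mu / (lam + mu)) * b ^ n -
        (b ^ (n + 1) - a ^ (n + 1)) / (((n : ℝ) + 1) * (b - a))| ≤
      ((b - a) / (lam + mu)) * ((lam ^ (p + 1) + mu ^ (p + 1)) / (lam + mu)) ^ (1 / p) *
        (1 / (p + 1)) ^ (1 / p) * |(n : ℝ)| *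
        ((a ^ (((n : ℝ) - 1) * q) + b ^ (((n : ℝ) - 1) * q)) / 2) ^ (1 / q) := by
  have hpq' : p.HolderConjugate q :=
    (Real.holderConjugate_iff.2 ⟨hq, by simpa only [one_div, add_comm] using hpq⟩).symm
  have hn1 : n ≠ -1 := by rcases abs_cases n with ⟨h, _⟩ | ⟨h, _⟩ <;> omega
  have hpos : ∀ x ∈ Icc a b, 0 < x := fun x hx => ha.trans_le hx.1
  have hweight : 1 - mu / (lam + mu) = lam / (lam + mu) := by field_simp; ring
  have key := abs_combo_sub_integral_div_le hpq' hab (div_nonneg hmu hlm.le)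
    (div_le_one_of_le₀ (le_add_of_nonneg_left hlam) hlm.le)
    (fun x hx => hasDerivAt_zpow n x (Or.inl (hpos x hx).ne'))
    (continuousOn_const.mul (continuousOn_id.zpow₀ _ fun x hx => Or.inl (hpos x hx).ne'))
    (convexOn_abs_mul_zpow_rpow ha n (n - 1) hq.le)
  rw [hweight, integral_zpow (Or.inr ⟨hn1, fun h => (hpos 0 (uIcc_of_le hab.le ▸ h)).false⟩),
    div_div, rpow_mean_abs_mul_zpow ha (ha.trans hab) n (n - 1) hpq'.symm.pos,
    rpow_moment_div_eq hlam hmu hlm hpq'.pos] at key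
  push_cast at key
  exact key.trans_eq (by ring)
end

section
/- Let 0 < a < b. For λ, μ ∈ [0,∞) with λ + μ > 0 and q > 1 with 1/p + 1/q = 1, set M₁ = H(a^{2q}, A_{λ/(λ+μ)}(b,a)^{2q})⁻¹ and M₂ = H(b^{2q}, A_{λ/(λ+μ)}(b,a)^{2q})⁻¹, where H(x,y) = 2xy/(x+y) is the unweighted harmonic mean and A_{λ/(λ+μ)}(b,a) = (λ b + μ a)/(λ+μ). Then |H_{λ/(λ+μ)}(a,b)⁻¹ − L(a,b)⁻¹| ≤ ((b−a)/(λ+μ)²) · (1/(p+1))^{1/p} · [λ² M₁^{1/q} + μ² M₂^{1/q}]. -/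
/-!
With `A = A_t(b, a)` one has `H_t(a, b)⁻¹ - L(a, b)⁻¹ = (b - a)⁻¹ ∫_a^b (A - x) / x² dx`.
Split the integral at `A`; on each half apply Hölder's inequality to the kernel `|A - x|` and the
weight `x⁻²`. The kernel contributes `(length^(p+1) / (p+1))^(1/p)`, and since `x ↦ x^(-2q)` is
convex its integral is at most the trapezoid value `length · H(·, ·)⁻¹` of the endpoints. As
`1 + 1/p + 1/q = 2`, the powers of the length combine to its square.
-/

open Real Set MeasureTheory intervalIntegral

theorem inv_two_mul_mul_div_add {K : Type*} [Field K] [CharZero K] {x y : K} (hx : x ≠ 0)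
    (hy : y ≠ 0) : (2 * x * y / (x + y))⁻¹ = (x⁻¹ + y⁻¹) / 2 := by
  rw [inv_div]
  field_simp
  ring

theorem convexOn_rpow_of_nonpos {r : ℝ} (hr : r ≤ 0) : ConvexOn ℝ (Ioi 0) fun x : ℝ => x ^ r := by
  refine ⟨convex_Ioi 0, fun x hx y hy θ η hθ hη hθη => ?_⟩
  have hx : 0 < x := hx
  have hy : 0 < y := hy
  simp only [smul_eq_mul]
  calc (θ * x + η * y) ^ r ≤ (x ^ θ * y ^ η) ^ r :=
        rpow_le_rpow_of_nonpos (by positivity)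
          (geom_mean_le_arith_mean2_weighted hθ hη hx.le hy.le hθη) hr
    _ = (x ^ r) ^ θ * (y ^ r) ^ η := by
        rw [mul_rpow (by positivity) (by positivity), ← rpow_mul hx.le, ← rpow_mul hy.le,
          mul_comm θ, mul_comm η, rpow_mul hx.le, rpow_mul hy.le]
    _ ≤ θ * x ^ r + η * y ^ r :=
        geom_mean_le_arith_mean2_weighted hθ hη (by positivity) (by positivity) hθη

theorem ConvexOn.apply_add_apply_reflect_le {α β : ℝ} {φ : ℝ → ℝ} (hφ : ConvexOn ℝ (Icc α β) φ)
    {x : ℝ} (hx : x ∈ Icc α β) : φ x + φ (α + β - x) ≤ φ α + φ β := by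
  obtain rfl | hαβ := (hx.1.trans hx.2).eq_or_lt
  · obtain rfl : x = α := le_antisymm hx.2 hx.1
    rw [add_sub_cancel_right]
  have hd : 0 < β - α := sub_pos.mpr hαβ
  set θ := (β - x) / (β - α)
  have hθ0 : 0 ≤ θ := div_nonneg (by linarith [hx.2]) hd.le
  have hθ1 : 0 ≤ 1 - θ := by
    rw [sub_nonneg, div_le_one hd]; linarith [hx.1]
  have hxθ : θ * α + (1 - θ) * β = x := by
    simp only [θ]; field_simp; ring
  have h₁ := hφ.2 (left_mem_Icc.mpr hαβ.le) (right_mem_Icc.mpr hαβ.le) hθ0 hθ1 (by ring)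
  have h₂ := hφ.2 (left_mem_Icc.mpr hαβ.le) (right_mem_Icc.mpr hαβ.le) hθ1 hθ0 (by ring)
  simp only [smul_eq_mul, hxθ] at h₁ h₂
  rw [show (1 - θ) * α + θ * β = α + β - x by linarith] at h₂
  linarith

theorem ConvexOn.intervalIntegral_le_trapezoid {α β : ℝ} {φ : ℝ → ℝ} (hαβ : α ≤ β)
    (hφ : ConvexOn ℝ (Icc α β) φ) (hint : IntervalIntegrable φ volume α β) :
    ∫ x in α..β, φ x ≤ (β - α) * ((φ α + φ β) / 2) := by
  have hint' : IntervalIntegrable (fun x => φ (α + β - x)) volume α β := by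
    simpa using (hint.comp_sub_left (α + β)).symm
  have hreflect : ∫ x in α..β, φ (α + β - x) = ∫ x in α..β, φ x := by
    simp [integral_comp_sub_left]
  have hsum := integral_mono_on hαβ (hint.add hint') intervalIntegrable_const
    fun x hx => hφ.apply_add_apply_reflect_le hx
  rw [integral_add hint hint', hreflect, intervalIntegral.integral_const, smul_eq_mul] at hsum
  linarith

theorem integral_mul_le_Lp_mul_Lq_of_continuousOn_Icc {α β p q : ℝ} (hαβ : α ≤ β)
    (hpq : p.HolderConjugate q) {f g : ℝ → ℝ} (hf : ContinuousOn f (Icc α β))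
    (hg : ContinuousOn g (Icc α β)) (hf0 : ∀ x ∈ Icc α β, 0 ≤ f x)
    (hg0 : ∀ x ∈ Icc α β, 0 ≤ g x) :
    ∫ x in α..β, f x * g x ≤
      (∫ x in α..β, f x ^ p) ^ (1 / p) * (∫ x in α..β, g x ^ q) ^ (1 / q) := by
  simp only [integral_of_le hαβ]
  have memLp : ∀ {h : ℝ → ℝ} (r : ℝ), ContinuousOn h (Icc α β) →
      MemLp h (ENNReal.ofReal r) (volume.restrict (Ioc α β)) := fun r hh => by
    obtain ⟨C, hC⟩ := isCompact_Icc.exists_bound_of_continuousOn hh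
    exact .of_bound ((hh.mono Ioc_subset_Icc_self).aestronglyMeasurable measurableSet_Ioc) C
      (ae_restrict_of_forall_mem measurableSet_Ioc fun x hx => hC x (Ioc_subset_Icc_self hx))
  have nonneg : ∀ {h : ℝ → ℝ}, (∀ x ∈ Icc α β, 0 ≤ h x) → 0 ≤ᵐ[volume.restrict (Ioc α β)] h :=
    fun hh => ae_restrict_of_forall_mem measurableSet_Ioc fun x hx => hh x (Ioc_subset_Icc_self hx)
  exact integral_mul_le_Lp_mul_Lq_of_nonneg hpq (nonneg hf0) (nonneg hg0) (memLp p hf) (memLp q hg)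

theorem integral_rpow_right_sub {α β p : ℝ} (hp : -1 < p) :
    ∫ x in α..β, (β - x) ^ p = (β - α) ^ (p + 1) / (p + 1) := by
  rw [integral_comp_sub_left (· ^ p), sub_self, integral_rpow (.inl hp),
    zero_rpow (by linarith), sub_zero]

theorem integral_rpow_sub_left {α β p : ℝ} (hp : -1 < p) :
    ∫ x in α..β, (x - α) ^ p = (β - α) ^ (p + 1) / (p + 1) := by
  rw [integral_comp_sub_right (· ^ p), sub_self, integral_rpow (.inl hp),
    zero_rpow (by linarith), sub_zero]

theorem integral_sub_div_sq {a b : ℝ} (ha : 0 < a) (hb : 0 < b) (A : ℝ) :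
    ∫ x in a..b, (A - x) / x ^ 2 = A / a - A / b - (log b - log a) := by
  have hpos : ∀ x ∈ uIcc a b, 0 < x := fun x hx =>
    lt_of_lt_of_le (lt_min ha hb) hx.1
  have hderiv : ∀ x ∈ uIcc a b, HasDerivAt (fun x => -A * x⁻¹ - log x) ((A - x) / x ^ 2) x := by
    intro x hx
    have hx := (hpos x hx).ne'
    exact (((hasDerivAt_inv hx).const_mul (-A)).sub (hasDerivAt_log hx)).congr_deriv
      (by field_simp)
  have hcont : ContinuousOn (fun x : ℝ => (A - x) / x ^ 2) (uIcc a b) :=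
    (continuousOn_const.sub continuousOn_id).div (continuousOn_pow 2)
      fun x hx => pow_ne_zero 2 (hpos x hx).ne'
  rw [integral_eq_sub_of_hasDerivAt hderiv hcont.intervalIntegrable]
  ring

theorem integral_div_sq_le {α β p q : ℝ} (hα : 0 < α) (hαβ : α ≤ β) (hpq : p.HolderConjugate q)
    {k : ℝ → ℝ} (hk : ContinuousOn k (Icc α β)) (hk0 : ∀ x ∈ Icc α β, 0 ≤ k x) :
    ∫ x in α..β, k x / x ^ 2 ≤ (∫ x in α..β, k x ^ p) ^ (1 / p) *
      ((β - α) * (((α ^ (2 * q))⁻¹ + (β ^ (2 * q))⁻¹) / 2)) ^ (1 / q) := by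
  have hpos : ∀ x ∈ Icc α β, 0 < x := fun x hx => hα.trans_le hx.1
  have hweight : ContinuousOn (fun x : ℝ => (x ^ 2)⁻¹) (Icc α β) :=
    (continuousOn_pow 2).inv₀ fun x hx => pow_ne_zero 2 (hpos x hx).ne'
  have hweight_rpow : ∀ x ∈ Icc α β, ((x ^ 2)⁻¹) ^ q = x ^ (-(2 * q)) := fun x hx => by
    have hx := (hpos x hx).le
    rw [← rpow_natCast, inv_rpow (rpow_nonneg hx _), ← rpow_mul hx, rpow_neg hx]
    norm_num
  have hconvex : ConvexOn ℝ (Icc α β) fun x : ℝ => x ^ (-(2 * q)) :=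
    (convexOn_rpow_of_nonpos (by linarith [hpq.symm.pos])).subset
      (fun x hx => hpos x hx) (convex_Icc α β)
  have htrapezoid : ∫ x in α..β, ((x ^ 2)⁻¹) ^ q ≤
      (β - α) * (((α ^ (2 * q))⁻¹ + (β ^ (2 * q))⁻¹) / 2) := by
    rw [integral_congr (fun x hx => hweight_rpow x (uIcc_of_le hαβ ▸ hx)),
      ← rpow_neg hα.le, ← rpow_neg (hα.le.trans hαβ)]
    refine hconvex.intervalIntegral_le_trapezoid hαβ (ContinuousOn.intervalIntegrable ?_)
    exact continuousOn_id.rpow_const fun x hx => .inl (hpos x (uIcc_of_le hαβ ▸ hx)).ne'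
  simp only [div_eq_mul_inv (k _)]
  refine (integral_mul_le_Lp_mul_Lq_of_continuousOn_Icc hαβ hpq hk hweight hk0
    fun x hx => by positivity).trans ?_
  refine mul_le_mul_of_nonneg_left
    (rpow_le_rpow ?_ htrapezoid (one_div_nonneg.mpr hpq.symm.pos.le)) (rpow_nonneg ?_ _)
  · exact intervalIntegral.integral_nonneg hαβ fun x hx => by positivity
  · exact intervalIntegral.integral_nonneg hαβ fun x hx => rpow_nonneg (hk0 x hx) p

theorem Real.HolderConjugate.rpow_add_one_div_mul_rpow {p q d E : ℝ} (hpq : p.HolderConjugate q)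
    (hd : 0 ≤ d) (hE : 0 ≤ E) :
    (d ^ (p + 1) / (p + 1)) ^ (1 / p) * (d * E) ^ (1 / q) =
      d ^ 2 * (1 / (p + 1)) ^ (1 / p) * E ^ (1 / q) := by
  have hp := hpq.pos
  have hexp : (p + 1) * (1 / p) + 1 / q = 2 := by
    have := hpq.inv_add_inv_eq_one
    field_simp at this ⊢
    linarith
  rw [div_eq_mul_one_div (d ^ _), mul_rpow (by positivity) (by positivity), mul_rpow hd hE,
    ← rpow_mul hd]
  calc d ^ ((p + 1) * (1 / p)) * (1 / (p + 1)) ^ (1 / p) * (d ^ (1 / q) * E ^ (1 / q))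
      = d ^ ((p + 1) * (1 / p) + 1 / q) * (1 / (p + 1)) ^ (1 / p) * E ^ (1 / q) := by
        rw [rpow_add' hd (by rw [hexp]; norm_num)]; ring
    _ = d ^ 2 * (1 / (p + 1)) ^ (1 / p) * E ^ (1 / q) := by
        rw [hexp, rpow_two]

theorem abs_div_mul_sub_log_div_le {a b A p q : ℝ} (ha : 0 < a) (hab : a < b) (haA : a ≤ A)
    (hAb : A ≤ b) (hpq : p.HolderConjugate q) :
    |A / (a * b) - (log b - log a) / (b - a)| ≤ (1 / (p + 1)) ^ (1 / p) / (b - a) *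
      ((A - a) ^ 2 * (((a ^ (2 * q))⁻¹ + (A ^ (2 * q))⁻¹) / 2) ^ (1 / q) +
        (b - A) ^ 2 * (((A ^ (2 * q))⁻¹ + (b ^ (2 * q))⁻¹) / 2) ^ (1 / q)) := by
  have hb := ha.trans hab
  have hA := ha.trans_le haA
  have hp : -1 < p := by linarith [hpq.pos]
  have hba : 0 < b - a := sub_pos.2 hab
  have hidentity : A / (a * b) - (log b - log a) / (b - a) =
      (∫ x in a..b, (A - x) / x ^ 2) / (b - a) := by
    rw [integral_sub_div_sq ha hb]
    field_simp
  have hcont : ContinuousOn (fun x : ℝ => (A - x) / x ^ 2) (Icc a b) :=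
    (continuousOn_const.sub continuousOn_id).div (continuousOn_pow 2)
      fun x hx => pow_ne_zero 2 (ha.trans_le hx.1).ne'
  have hAmem : A ∈ Icc a b := ⟨haA, hAb⟩
  have hsplit : ∫ x in a..b, (A - x) / x ^ 2 =
      (∫ x in a..A, (A - x) / x ^ 2) - ∫ x in A..b, (x - A) / x ^ 2 := by
    rw [← integral_add_adjacent_intervals
      (hcont.mono (uIcc_subset_Icc (left_mem_Icc.2 hab.le) hAmem)).intervalIntegrable
      (hcont.mono (uIcc_subset_Icc hAmem (right_mem_Icc.2 hab.le))).intervalIntegrable,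
      sub_eq_add_neg,
      ← intervalIntegral.integral_neg]
    congr 1
    exact integral_congr fun x _ => by ring
  have hleft := integral_div_sq_le ha haA hpq (k := fun x => A - x) (by fun_prop)
    fun x hx => sub_nonneg.2 hx.2
  have hright := integral_div_sq_le hA hAb hpq (k := fun x => x - A) (by fun_prop)
    fun x hx => sub_nonneg.2 hx.1
  rw [integral_rpow_right_sub hp, hpq.rpow_add_one_div_mul_rpow (sub_nonneg.2 haA)
    (by positivity)] at hleft
  rw [integral_rpow_sub_left hp, hpq.rpow_add_one_div_mul_rpow (sub_nonneg.2 hAb)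
    (by positivity)] at hright
  have hI₁ : 0 ≤ ∫ x in a..A, (A - x) / x ^ 2 :=
    intervalIntegral.integral_nonneg haA fun x hx => div_nonneg (sub_nonneg.2 hx.2) (sq_nonneg x)
  have hI₂ : 0 ≤ ∫ x in A..b, (x - A) / x ^ 2 :=
    intervalIntegral.integral_nonneg hAb fun x hx => div_nonneg (sub_nonneg.2 hx.1) (sq_nonneg x)
  rw [hidentity, hsplit, abs_div, abs_of_pos hba]
  calc _ ≤ ((∫ x in a..A, (A - x) / x ^ 2) + ∫ x in A..b, (x - A) / x ^ 2) / (b - a) := by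
        gcongr
        exact abs_le.2 ⟨by linarith, by linarith⟩
    _ ≤ ((A - a) ^ 2 * (1 / (p + 1)) ^ (1 / p) * (((a ^ (2 * q))⁻¹ + (A ^ (2 * q))⁻¹) / 2) ^ (1 / q)
          + (b - A) ^ 2 * (1 / (p + 1)) ^ (1 / p) *
            (((A ^ (2 * q))⁻¹ + (b ^ (2 * q))⁻¹) / 2) ^ (1 / q)) / (b - a) := by
        gcongr
    _ = _ := by ring

/-- Proposition 3.5 of the paper: application to special means, where
`H(x,y) = 2xy/(x+y)`, `A_{λ/(λ+μ)}(b,a) = (λb+μa)/(λ+μ)`,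
`H_{λ/(λ+μ)}(a,b)⁻¹ = (λ/(λ+μ))/a + (μ/(λ+μ))/b` and
`L(a,b)⁻¹ = (ln b - ln a)/(b-a)`. -/
theorem stmt_14 (a b : ℝ) (ha : 0 < a) (hab : a < b)
    (lam mu : ℝ) (hlam : 0 ≤ lam) (hmu : 0 ≤ mu) (hlm : 0 < lam + mu)
    (p q : ℝ) (hq : 1 < q) (hpq : 1 / p + 1 / q = 1)
    (M1 M2 : ℝ)
    (hM1 : M1 = (2 * a ^ (2 * q) * ((lam * b + mu * a) / (lam + mu)) ^ (2 * q) /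
      (a ^ (2 * q) + ((lam * b + mu * a) / (lam + mu)) ^ (2 * q)))⁻¹)
    (hM2 : M2 = (2 * b ^ (2 * q) * ((lam * b + mu * a) / (lam + mu)) ^ (2 * q) /
      (b ^ (2 * q) + ((lam * b + mu * a) / (lam + mu)) ^ (2 * q)))⁻¹) :
    |(lam / (lam + mu)) / a + (mu / (lam + mu)) / b -
        (Real.log b - Real.log a) / (b - a)| ≤
      ((b - a) / (lam + mu) ^ 2) * (1 / (p + 1)) ^ (1 / p) *
        (lam ^ 2 * M1 ^ (1 / q) + mu ^ 2 * M2 ^ (1 / q)) := by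
  have hpq' : p.HolderConjugate q :=
    (holderConjugate_iff.2 ⟨hq, by simpa only [one_div, add_comm] using hpq⟩).symm
  set A := (lam * b + mu * a) / (lam + mu) with hA_def
  have haA : a ≤ A := by rw [le_div_iff₀ hlm]; nlinarith
  have hAb : A ≤ b := by rw [div_le_iff₀ hlm]; nlinarith
  have hb := ha.trans hab
  have hA := ha.trans_le haA
  have hM1' : M1 = ((a ^ (2 * q))⁻¹ + (A ^ (2 * q))⁻¹) / 2 :=
    hM1.trans (inv_two_mul_mul_div_add (by positivity) (by positivity))
  have hM2' : M2 = ((A ^ (2 * q))⁻¹ + (b ^ (2 * q))⁻¹) / 2 := by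
    rw [hM2, inv_two_mul_mul_div_add (by positivity) (by positivity), add_comm]
  have hlhs : lam / (lam + mu) / a + mu / (lam + mu) / b = A / (a * b) := by
    rw [hA_def]
    field_simp
  have hrhs : (b - a) / (lam + mu) ^ 2 * (1 / (p + 1)) ^ (1 / p) *
      (lam ^ 2 * M1 ^ (1 / q) + mu ^ 2 * M2 ^ (1 / q)) = (1 / (p + 1)) ^ (1 / p) / (b - a) *
      ((A - a) ^ 2 * M1 ^ (1 / q) + (b - A) ^ 2 * M2 ^ (1 / q)) := by
    have hba : b - a ≠ 0 := (sub_pos.2 hab).ne'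
    rw [hA_def]
    field_simp
    ring
  rw [hlhs, hrhs, hM1', hM2']
  exact abs_div_mul_sub_log_div_le ha hab haA hAb hpq'
end
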